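/- In any connected chordal graph G there exists a clique that intersects every longest path of G (a total clique exists). -/

import Mathlib

open SimpleGraph

def IsChordal {V : Type*} (G : SimpleGraph V) : Prop :=
  ∀ ⦃u : V⦄ (c : G.Walk u u), c.IsCycle → 4 ≤ c.length →
    ∃ x y : V, x ∈ c.support ∧ y ∈ c.support ∧ G.Adj x y ∧ s(x, y) ∉ c.edges

def IsDetour {V : Type*} (G : SimpleGraph V) {u v : V} (P : G.Walk u v) : Prop :=
  P.IsPath ∧ ∀ ⦃x y : V⦄ (Q : G.Walk x y), Q.IsPath → Q.length ≤ P.length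

/-!
Two longest paths of a connected graph always share a vertex: otherwise a shortest path from one
to the other, extended at both ends by the longer halves of the two, would be longer still. So the
vertex sets of the longest paths are connected and pairwise intersecting, and it suffices that in a
chordal graph every finite family of connected, pairwise touching vertex sets is met by one clique.
This goes by induction, deleting a simplicial vertex, whose existence is Dirac's theorem.
-/

namespace SimpleGraph

variable {V : Type*} {G : SimpleGraph V}

namespace Walk

variable {u v w x y : V}

lemma IsPath.append {p : G.Walk u v} {q : G.Walk v w} (hp : p.IsPath) (hq : q.IsPath)
    (h : ∀ z ∈ p.support, z ∈ q.support → z = v) : (p.append q).IsPath := by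
  rw [isPath_def, support_append]
  refine hp.support_nodup.append hq.support_nodup.tail fun z hzp hzq => ?_
  obtain rfl := h z hzp (List.mem_of_mem_tail hzq)
  have := hq.support_nodup
  rw [← cons_tail_support] at this
  exact (List.nodup_cons.mp this).1 hzq

lemma isChordless_of_forall_length_le {s : Set V} (p : G.Walk x y)
    (hs : ∀ z ∈ p.support, z ∈ s)
    (hmin : ∀ q : G.Walk x y, (∀ z ∈ q.support, z ∈ s) → p.length ≤ q.length) :
    p.IsChordless := by
  induction p with
  | nil => simp [isChordless_iff_forall_mem_edges]
  | @cons x u y h p ih =>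
    have hps : ∀ z ∈ p.support, z ∈ s := fun z hz => hs z (by simp [hz])
    replace ih := ih hps fun q hq => by
      simpa using hmin (cons h q) (by simpa [hs x (by simp)] using hq)
    have hnbr : ∀ ⦃z⦄, z ∈ p.support → G.Adj x z → z = u := by
      intro z hz hxz
      obtain ⟨q, r, rfl⟩ := mem_support_iff_exists_append.mp hz
      have := hmin (cons hxz r) (by
        simp only [support_cons, List.mem_cons, forall_eq_or_imp]
        exact ⟨hs x (by simp), fun t ht => hps t (by simp [ht])⟩)
      simp only [length_cons, length_append] at this
      exact (eq_of_length_eq_zero (p := q) (by omega)).symm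
    rw [isChordless_iff_forall_mem_edges] at ih ⊢
    simp only [support_cons, List.mem_cons, edges_cons]
    rintro a b (rfl | ha) (rfl | hb) hab
    · exact (hab.ne rfl).elim
    · exact .inl (by rw [hnbr hb hab])
    · exact .inl (by rw [hnbr ha hab.symm, Sym2.eq_swap])
    · exact .inr (ih ha hb hab)

lemma exists_isPath_isChordless {s : Set V} (w : G.Walk x y) (hw : ∀ z ∈ w.support, z ∈ s) :
    ∃ p : G.Walk x y, p.IsPath ∧ p.IsChordless ∧ ∀ z ∈ p.support, z ∈ s := by
  classical
  have hex : ∃ n, ∃ q : G.Walk x y, (∀ z ∈ q.support, z ∈ s) ∧ q.length = n := ⟨_, w, hw, rfl⟩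
  obtain ⟨q, hq, hqlen⟩ := Nat.find_spec hex
  have hs : ∀ z ∈ q.bypass.support, z ∈ s := fun z hz => hq z (q.support_bypass_subset_support hz)
  refine ⟨q.bypass, q.bypass_isPath, isChordless_of_forall_length_le _ hs fun r hr => ?_, hs⟩
  calc q.bypass.length ≤ q.length := q.length_bypass_le_length
    _ = Nat.find hex := hqlen
    _ ≤ r.length := Nat.find_min' hex ⟨r, hr, rfl⟩

lemma exists_adj_walk_not_mem_support (w : G.Walk x v) (hx : x ≠ v) :
    ∃ u, G.Adj u v ∧ ∃ q : G.Walk x u, (∀ z ∈ q.support, z ∈ w.support) ∧ v ∉ q.support := by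
  induction w with
  | nil => exact absurd rfl hx
  | @cons x u v h w ih =>
    by_cases hu : u = v
    · subst hu
      exact ⟨x, h, nil, by simp, by simpa using hx.symm⟩
    · obtain ⟨t, ht, q, hqw, hvq⟩ := ih hu
      refine ⟨t, ht, cons h q, ?_, by simp [hx.symm, hvq]⟩
      simp only [support_cons, List.mem_cons, forall_eq_or_imp, true_or, true_and]
      exact fun z hz => .inr (hqw z hz)

lemma IsPath.exists_isPath_length_le_two_mul {W : G.Walk x y} (hW : W.IsPath)
    (hv : v ∈ W.support) :
    ∃ u, ∃ H : G.Walk u v, H.IsPath ∧ (∀ z ∈ H.support, z ∈ W.support) ∧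
      W.length ≤ 2 * H.length := by
  obtain ⟨q, r, rfl⟩ := Walk.mem_support_iff_exists_append.mp hv
  rw [length_append]
  rcases le_total r.length q.length with h | h
  · exact ⟨x, q, hW.of_append_left, fun z hz => by simp [hz], by omega⟩
  · refine ⟨y, r.reverse, hW.of_append_right.reverse, fun z hz => ?_, by simp; omega⟩
    simp only [support_reverse, List.mem_reverse] at hz
    simp [hz]

lemma IsPath.isCycle_cons_concat {a : V} {P : G.Walk x y} (hP : P.IsPath) (ha : a ∉ P.support)
    (hxy : x ≠ y) (hax : G.Adj a x) (hya : G.Adj y a) : (cons hax (P.concat hya)).IsCycle := by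
  rw [cons_isCycle_iff, edges_concat, List.concat_eq_append]
  refine ⟨hP.concat ha hya, fun h => ?_⟩
  rcases List.mem_append.mp h with h | h
  · exact ha (P.fst_mem_support_of_mem_edges h)
  · rcases Sym2.eq_iff.mp (List.mem_singleton.mp h) with ⟨rfl, -⟩ | ⟨-, rfl⟩
    · exact hya.ne rfl
    · exact hxy rfl

lemma IsChordless.cons_concat {a : V} {P : G.Walk x y} (hP : P.IsChordless) (hax : G.Adj a x)
    (hya : G.Adj y a) (hN : ∀ z ∈ P.support, G.Adj a z → z = x ∨ z = y) :
    (cons hax (P.concat hya)).IsChordless := by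
  have hmem : ∀ z ∈ (cons hax (P.concat hya)).support, z = a ∨ z ∈ P.support := by
    simp only [support_cons, support_concat, List.mem_cons, List.mem_append, List.mem_nil_iff,
      or_false]
    tauto
  have ha : ∀ z ∈ P.support, G.Adj a z → s(a, z) ∈ (cons hax (P.concat hya)).edges := by
    intro z hz haz
    rcases hN z hz haz with rfl | rfl <;> simp [edges_concat, Sym2.eq_swap]
  rw [isChordless_iff_forall_mem_edges]
  intro u v hu hv huv
  rcases hmem u hu with rfl | huP <;> rcases hmem v hv with rfl | hvP
  · exact (huv.ne rfl).elim
  · exact ha v hvP huv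
  · exact Sym2.eq_swap ▸ ha u huP huv.symm
  · simp [edges_concat, hP.mem_edges huP hvP huv]

end Walk

lemma Connected.exists_isPath_between (hG : G.Connected) {A B : Set V} (hA : A.Nonempty)
    (hB : B.Nonempty) :
    ∃ a ∈ A, ∃ b ∈ B, ∃ R : G.Walk a b, R.IsPath ∧
      (∀ z ∈ R.support, z ∈ A → z = a) ∧ ∀ z ∈ R.support, z ∈ B → z = b := by
  classical
  obtain ⟨a₀, ha₀⟩ := hA
  obtain ⟨b₀, hb₀⟩ := hB
  have hex : ∃ n, ∃ a ∈ A, ∃ b ∈ B, ∃ R : G.Walk a b, R.length = n :=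
    ⟨_, a₀, ha₀, b₀, hb₀, (hG.preconnected a₀ b₀).some, rfl⟩
  obtain ⟨a, ha, b, hb, R, hR⟩ := Nat.find_spec hex
  have hmin : ∀ a' ∈ A, ∀ b' ∈ B, ∀ R' : G.Walk a' b', R.bypass.length ≤ R'.length :=
    fun a' ha' b' hb' R' => (R.length_bypass_le_length.trans hR.le).trans
      (Nat.find_min' hex ⟨a', ha', b', hb', R', rfl⟩)
  refine ⟨a, ha, b, hb, R.bypass, R.bypass_isPath, fun z hz hzA => ?_, fun z hz hzB => ?_⟩
  · obtain ⟨q, r, hqr⟩ := Walk.mem_support_iff_exists_append.mp hz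
    have := hmin z hzA b hb r
    rw [hqr, Walk.length_append] at this
    exact (Walk.eq_of_length_eq_zero (p := q) (by omega)).symm
  · obtain ⟨q, r, hqr⟩ := Walk.mem_support_iff_exists_append.mp hz
    have := hmin a ha z hzB q
    rw [hqr, Walk.length_append] at this
    exact Walk.eq_of_length_eq_zero (p := r) (by omega)

lemma induce_reachable_iff_exists_walk {s : Set V} {x y : V} (hx : x ∈ s) (hy : y ∈ s) :
    (G.induce s).Reachable ⟨x, hx⟩ ⟨y, hy⟩ ↔ ∃ w : G.Walk x y, ∀ z ∈ w.support, z ∈ s :=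
  ⟨fun ⟨p⟩ => ⟨p.map (Embedding.induce s).toHom, fun z hz => by
    have hz' : z ∈ (p.map (Embedding.induce s).toHom).support := hz
    rw [Walk.support_map] at hz'
    obtain ⟨⟨z, hzs⟩, -, rfl⟩ := List.mem_map.mp hz'
    exact hzs⟩, fun ⟨w, hw⟩ => ⟨w.induce s hw⟩⟩

lemma induce_preconnected_iff_exists_walk {s : Set V} :
    (G.induce s).Preconnected ↔ ∀ x ∈ s, ∀ y ∈ s, ∃ w : G.Walk x y, ∀ z ∈ w.support, z ∈ s := by
  simp only [Preconnected, Subtype.forall, induce_reachable_iff_exists_walk]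

lemma exists_induce_preconnected_closed {s : Set V} {b : V} (hb : b ∈ s) :
    ∃ C ⊆ s, b ∈ C ∧ (G.induce C).Preconnected ∧ ∀ x ∈ C, ∀ y ∈ s, G.Adj x y → y ∈ C := by
  set C : Set V := {x | ∃ w : G.Walk b x, ∀ z ∈ w.support, z ∈ s}
  have hbC : b ∈ C := ⟨.nil, by simpa⟩
  refine ⟨C, fun x ⟨w, hw⟩ => hw x w.end_mem_support, hbC, ?_, ?_⟩
  · refine (induce_connected_of_patches b hbC fun {x} ⟨w, hw⟩ =>
      ⟨{z | z ∈ w.support}, fun z hz => ?_, w.start_mem_support, w.end_mem_support,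
        (induce_reachable_iff_exists_walk _ _).mpr ⟨w, fun z hz => hz⟩⟩).preconnected
    obtain ⟨q, r, rfl⟩ := Walk.mem_support_iff_exists_append.mp hz
    exact ⟨q, fun t ht => hw t (by simp [ht])⟩
  · rintro x ⟨w, hw⟩ y hy hxy
    refine ⟨w.concat hxy, fun z hz => ?_⟩
    rw [Walk.support_concat, List.mem_append, List.mem_singleton] at hz
    exact hz.elim (hw z) (· ▸ hy)

lemma exists_adj_of_induce_preconnected {S : Set V} {v : V} (hS : (G.induce S).Preconnected)
    (hv : v ∈ S) (hSv : ¬ S ⊆ {v}) : ∃ u ∈ S, u ≠ v ∧ G.Adj v u := by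
  obtain ⟨s, hs, hsv⟩ := Set.not_subset.mp hSv
  obtain ⟨w, hw⟩ := induce_preconnected_iff_exists_walk.mp hS s hs v hv
  obtain ⟨u, huv, q, hqw, -⟩ := w.exists_adj_walk_not_mem_support hsv
  exact ⟨u, hw u (hqw u q.end_mem_support), huv.ne, huv.symm⟩

/-- Every vertex of `S \ {v}` reaches a neighbour of `v` inside `S \ {v}`, and these neighbours
are pairwise adjacent. -/
lemma induce_diff_singleton_preconnected {S : Set V} {v : V} (hS : (G.induce S).Preconnected)
    (hv : G.IsClique (S ∩ G.neighborSet v)) : (G.induce (S \ {v})).Preconnected := by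
  by_cases hvS : v ∈ S
  swap
  · rwa [Set.sdiff_singleton_eq_self hvS]
  have toN : ∀ x (hx : x ∈ S \ {v}), ∃ u, ∃ hu : u ∈ S \ {v}, G.Adj v u ∧
      (G.induce (S \ {v})).Reachable ⟨x, hx⟩ ⟨u, hu⟩ := by
    intro x hx
    obtain ⟨w, hw⟩ := induce_preconnected_iff_exists_walk.mp hS x hx.1 v hvS
    obtain ⟨u, huv, q, hqw, hvq⟩ := w.exists_adj_walk_not_mem_support hx.2
    have hq : ∀ z ∈ q.support, z ∈ S \ {v} :=
      fun z hz => ⟨hw z (hqw z hz), fun h => hvq (h ▸ hz)⟩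
    exact ⟨u, hq u q.end_mem_support, huv.symm,
      (induce_reachable_iff_exists_walk _ _).mpr ⟨q, hq⟩⟩
  rintro ⟨x, hx⟩ ⟨y, hy⟩
  obtain ⟨u, hu, hvu, hxu⟩ := toN x hx
  obtain ⟨u', hu', hvu', hyu'⟩ := toN y hy
  refine hxu.trans (Reachable.trans ?_ hyu'.symm)
  rcases eq_or_ne u u' with rfl | hne
  · rfl
  · exact Adj.reachable (G := G.induce (S \ {v})) (hv ⟨hu.1, hvu⟩ ⟨hu'.1, hvu'⟩ hne)

def IsSimplicial (G : SimpleGraph V) (U : Set V) (v : V) : Prop :=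
  v ∈ U ∧ G.IsClique (U ∩ G.neighborSet v)

lemma IsSimplicial.isClique_insert_inter_neighborSet {U : Set V} {v : V}
    (hv : G.IsSimplicial U v) : G.IsClique (insert v (U ∩ G.neighborSet v)) :=
  isClique_insert.mpr ⟨hv.2, fun _ hx _ => hx.2⟩

lemma exists_isSimplicial_not_mem {U T : Set V}
    (hU : ∀ p ∈ U, ∀ q ∈ U, p ≠ q → ¬ G.Adj p q → ∃ v, G.IsSimplicial U v ∧ v ≠ p ∧ ¬ G.Adj p v)
    (hT : G.IsClique T) {c : V} (hc : c ∈ U) (hcT : c ∉ T) : ∃ v, G.IsSimplicial U v ∧ v ∉ T := by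
  by_cases hcl : G.IsClique U
  · exact ⟨c, ⟨hc, hcl.subset Set.inter_subset_left⟩, hcT⟩
  obtain ⟨p, hp, q, hq, hpq, hnpq⟩ : ∃ p ∈ U, ∃ q ∈ U, p ≠ q ∧ ¬ G.Adj p q := by
    simpa [IsClique, Set.Pairwise] using hcl
  obtain ⟨v, hv, hvp, hnpv⟩ := hU p hp q hq hpq hnpq
  by_cases hvT : v ∈ T
  · obtain ⟨w, hw, hwv, hnvw⟩ := hU v hv.1 p hp hvp fun h => hnpv h.symm
    exact ⟨w, hw, fun hwT => hnvw (hT hvT hwT hwv.symm)⟩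
  · exact ⟨v, hv, hvT⟩

def Touch (G : SimpleGraph V) (S T : Set V) : Prop :=
  ∃ s ∈ S, ∃ t ∈ T, s = t ∨ G.Adj s t

lemma Touch.diff_singleton {S T : Set V} {v : V} (h : G.Touch S T)
    (hS : (G.induce S).Preconnected) (hT : (G.induce T).Preconnected) (hSv : ¬ S ⊆ {v})
    (hTv : ¬ T ⊆ {v}) (hv : G.IsClique ((S ∪ T) ∩ G.neighborSet v)) :
    G.Touch (S \ {v}) (T \ {v}) := by
  have hN : ∀ p ∈ S, ∀ q ∈ T, G.Adj v p → G.Adj v q → G.Touch (S \ {v}) (T \ {v}) :=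
    fun p hp q hq hvp hvq => ⟨p, ⟨hp, hvp.ne'⟩, q, ⟨hq, hvq.ne'⟩,
      (eq_or_ne p q).imp_right (hv ⟨.inl hp, hvp⟩ ⟨.inr hq, hvq⟩)⟩
  obtain ⟨s, hs, t, ht, hst⟩ := h
  by_cases hsv : s = v
  · rw [hsv] at hs hst
    obtain ⟨u, hu, -, hvu⟩ := exists_adj_of_induce_preconnected hS hs hSv
    by_cases htv : t = v
    · rw [htv] at ht
      obtain ⟨u', hu', -, hvu'⟩ := exists_adj_of_induce_preconnected hT ht hTv
      exact hN u hu u' hu' hvu hvu'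
    · exact hN u hu t ht hvu (hst.resolve_left (Ne.symm htv))
  · by_cases htv : t = v
    · rw [htv] at ht hst
      obtain ⟨u', hu', -, hvu'⟩ := exists_adj_of_induce_preconnected hT ht hTv
      exact hN s hs u' hu' (hst.resolve_left hsv).symm hvu'
    · exact ⟨s, ⟨hs, hsv⟩, t, ⟨ht, htv⟩, hst⟩

end SimpleGraph

namespace IsChordal

open Walk

variable {V : Type*} {G : SimpleGraph V}

lemma length_lt_four (hG : IsChordal G) {u : V} {c : G.Walk u u} (hc : c.IsCycle)
    (hcl : c.IsChordless) : c.length < 4 := by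
  by_contra! h
  obtain ⟨x, y, hx, hy, hxy, hxyc⟩ := hG c hc h
  exact hxyc (hcl.mem_edges hx hy hxy)

/-- Two non-adjacent such vertices would be joined by a chordless path through `C`, which closes
up through `a` to a chordless cycle of length at least four. -/
theorem isClique_common_neighbors (hG : IsChordal G) {C : Set V} (hC : (G.induce C).Preconnected)
    {a : V} (haC : a ∉ C) (hCa : ∀ c ∈ C, ¬ G.Adj a c) :
    G.IsClique {x | G.Adj a x ∧ ∃ c ∈ C, G.Adj x c} := by
  rintro x ⟨hax, c, hc, hxc⟩ y ⟨hay, d, hd, hyd⟩ hxy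
  by_contra hnxy
  obtain ⟨w, hw⟩ := induce_preconnected_iff_exists_walk.mp hC c hc d hd
  obtain ⟨P, hPpath, hPcl, hPs⟩ := (cons hxc (w.concat hyd.symm)).exists_isPath_isChordless
    (s := insert x (insert y C)) (by
      simp only [support_cons, support_concat, List.mem_cons, List.mem_append, List.mem_nil_iff,
        or_false]
      rintro z (rfl | hz | rfl)
      exacts [.inl rfl, .inr (.inr (hw z hz)), .inr (.inl rfl)])
  have hN : ∀ z ∈ P.support, G.Adj a z → z = x ∨ z = y := fun z hz haz => by
    rcases hPs z hz with h | h | h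
    exacts [.inl h, .inr h, absurd haz (hCa z h)]
  have haP : a ∉ P.support := fun h => by
    rcases hPs a h with rfl | rfl | h
    exacts [hax.ne rfl, hay.ne rfl, haC h]
  have hlen : 2 ≤ P.length := by
    by_contra! h
    interval_cases hP : P.length
    · exact hxy (eq_of_length_eq_zero hP)
    · exact hnxy (adj_of_length_eq_one hP)
  have := hG.length_lt_four (hPpath.isCycle_cons_concat haP hxy hax hay.symm)
    (hPcl.cons_concat hax hay.symm hN)
  simp only [length_cons, length_concat] at this
  omega

/-- Dirac's argument: let `C` be the component of `b` among the non-neighbours of `a` and `S` the clique of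
neighbours of `a` adjacent to `C`. By induction `C ∪ S` has a simplicial vertex outside `S`, and
it stays simplicial in `U` since all its neighbours lie in `C ∪ S`. -/
theorem exists_isSimplicial_of_not_adj (hG : IsChordal G) (U : Finset V) :
    ∀ a ∈ U, ∀ b ∈ U, a ≠ b → ¬ G.Adj a b → ∃ v, G.IsSimplicial U v ∧ v ≠ a ∧ ¬ G.Adj a v := by
  classical
  induction U using Finset.strongInduction with | H U ih =>
  intro a ha b hb hab hnab
  obtain ⟨C, hCs, hbC, hC, hCclosed⟩ :=
    exists_induce_preconnected_closed (G := G) (s := {x | x ∈ U ∧ x ≠ a ∧ ¬ G.Adj a x})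
      ⟨hb, hab.symm, hnab⟩
  have hCa : ∀ c ∈ C, ¬ G.Adj a c := fun c hc => (hCs hc).2.2
  set S := {x | G.Adj a x ∧ ∃ c ∈ C, G.Adj x c}
  have hS : G.IsClique S := hG.isClique_common_neighbors hC (fun h => (hCs h).2.1 rfl) hCa
  set U' := U.filter (fun x => x ∈ C ∨ x ∈ S)
  have hU' : U' ⊂ U := Finset.filter_ssubset.mpr
    ⟨a, ha, fun h => h.elim (fun h => (hCs h).2.1 rfl) (fun h => h.1.ne rfl)⟩
  have hnbr : ∀ c ∈ C, ∀ y ∈ U, G.Adj c y → y ∈ U' := by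
    intro c hc y hy hcy
    refine Finset.mem_filter.mpr ⟨hy, ?_⟩
    by_cases hay : G.Adj a y
    · exact .inr ⟨hay, c, hc, hcy.symm⟩
    · exact .inl (hCclosed c hc y ⟨hy, fun h => hCa c hc (h ▸ hcy.symm), hay⟩ hcy)
  obtain ⟨v, ⟨hvU', hvcl⟩, hvS⟩ := exists_isSimplicial_not_mem (U := U')
    (fun p hp q hq => ih U' hU' p hp q hq) hS (Finset.mem_filter.mpr ⟨hb, .inl hbC⟩)
    (fun h => hnab h.1)
  have hvC : v ∈ C := (Finset.mem_filter.mp hvU').2.resolve_right hvS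
  refine ⟨v, ⟨(Finset.mem_filter.mp hvU').1, hvcl.subset fun y ⟨hyU, hvy⟩ => ?_⟩,
    (hCs hvC).2.1, hCa v hvC⟩
  exact ⟨hnbr v hvC y hyU hvy, hvy⟩

theorem exists_isSimplicial (hG : IsChordal G) {U : Finset V} (hU : U.Nonempty) :
    ∃ v, G.IsSimplicial U v :=
  let ⟨c, hc⟩ := hU
  (exists_isSimplicial_not_mem (hG.exists_isSimplicial_of_not_adj U) isClique_empty hc
    (Set.notMem_empty c)).imp fun _ h => h.1

/-- Removing a simplicial vertex `v` from every set keeps them connected and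
pairwise touching; if some set lies inside `{v}`, the closed neighbourhood of `v` meets them all. -/
theorem exists_isClique_forall_exists_mem (hG : IsChordal G) (U : Finset V)
    (F : Set (Set V)) (hFU : ∀ S ∈ F, S ⊆ U) (hne : ∀ S ∈ F, S.Nonempty)
    (hconn : ∀ S ∈ F, (G.induce S).Preconnected) (htouch : ∀ S ∈ F, ∀ T ∈ F, G.Touch S T) :
    ∃ X : Finset V, G.IsClique (X : Set V) ∧ ∀ S ∈ F, ∃ x ∈ X, x ∈ S := by
  classical
  induction U using Finset.strongInduction generalizing F with | H U ih =>
  rcases F.eq_empty_or_nonempty with rfl | ⟨S₀, hS₀⟩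
  · exact ⟨∅, by simp, by simp⟩
  obtain ⟨v, hv⟩ := hG.exists_isSimplicial (U := U)
    (Finset.coe_nonempty.mp ((hne S₀ hS₀).mono (hFU S₀ hS₀)))
  by_cases hsing : ∃ S₁ ∈ F, S₁ ⊆ {v}
  · obtain ⟨S₁, hS₁, hS₁v⟩ := hsing
    have hclique : G.IsClique ((insert v (U.filter (G.Adj v)) : Finset V) : Set V) := by
      rw [Finset.coe_insert, Finset.coe_filter]
      exact hv.isClique_insert_inter_neighborSet
    refine ⟨_, hclique, fun S hS => ?_⟩
    obtain ⟨s, hs, t, ht, hst⟩ := htouch S hS S₁ hS₁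
    obtain rfl : t = v := hS₁v ht
    refine ⟨s, ?_, hs⟩
    rcases hst with rfl | hsv
    · exact Finset.mem_insert_self _ _
    · exact Finset.mem_insert_of_mem (Finset.mem_filter.mpr ⟨hFU S hS hs, hsv.symm⟩)
  push Not at hsing
  obtain ⟨X, hX, hXF⟩ := ih (U.erase v) (Finset.erase_ssubset hv.1) ((· \ {v}) '' F)
    (by
      rintro _ ⟨S, hS, rfl⟩ x ⟨hxS, hxv⟩
      exact Finset.mem_erase.mpr ⟨hxv, hFU S hS hxS⟩)
    (by
      rintro _ ⟨S, hS, rfl⟩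
      exact Set.sdiff_nonempty.mpr (hsing S hS))
    (by
      rintro _ ⟨S, hS, rfl⟩
      exact induce_diff_singleton_preconnected (hconn S hS)
        (hv.2.subset (Set.inter_subset_inter_left _ (hFU S hS))))
    (by
      rintro _ ⟨S, hS, rfl⟩ _ ⟨T, hT, rfl⟩
      exact (htouch S hS T hT).diff_singleton (hconn S hS) (hconn T hT) (hsing S hS) (hsing T hT)
        (hv.2.subset (Set.inter_subset_inter_left _ (Set.union_subset (hFU S hS) (hFU T hT)))))
  exact ⟨X, hX, fun S hS => (hXF _ ⟨S, hS, rfl⟩).imp fun x hx => ⟨hx.1, hx.2.1⟩⟩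

end IsChordal

theorem IsDetour.exists_mem_support_mem_support {V : Type*} {G : SimpleGraph V}
    (hG : G.Connected) {u v x y : V} {P : G.Walk u v} {Q : G.Walk x y} (hP : IsDetour G P)
    (hQ : IsDetour G Q) : ∃ z ∈ P.support, z ∈ Q.support := by
  by_contra! hdisj
  obtain ⟨p, hp, q, hq, R, hR, hRP, hRQ⟩ := hG.exists_isPath_between
    (A := {z | z ∈ P.support}) (B := {z | z ∈ Q.support})
    ⟨u, P.start_mem_support⟩ ⟨x, Q.start_mem_support⟩
  obtain ⟨a, Hp, hHp, hHpP, hPlen⟩ := hP.1.exists_isPath_length_le_two_mul hp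
  obtain ⟨b, Hq, hHq, hHqQ, hQlen⟩ := hQ.1.exists_isPath_length_le_two_mul hq
  have hRlen : R.length ≠ 0 := fun h => hdisj p hp ((Walk.eq_of_length_eq_zero h) ▸ hq)
  have hW : (Hp.append (R.append Hq.reverse)).IsPath := by
    refine hHp.append (hR.append hHq.reverse fun z hzR hzQ =>
      hRQ z hzR (hHqQ z (by simpa using hzQ))) fun z hzP hz => ?_
    rcases (Walk.mem_support_append_iff _ _).mp hz with hz | hz
    · exact hRP z hz (hHpP z hzP)
    · exact absurd (hHqQ z (by simpa using hz)) (hdisj z (hHpP z hzP))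
  have := hP.2 _ hW
  have := hQ.2 _ hP.1
  have := hP.2 _ hQ.1
  simp only [Walk.length_append, Walk.length_reverse] at *
  omega

/-- Every finite connected chordal graph contains a total clique:
a clique intersecting every longest path. -/
theorem exists_total_clique {V : Type*} [Fintype V] (G : SimpleGraph V)
    (hconn : G.Connected) (hchord : IsChordal G) :
    ∃ X : Finset V, G.IsClique (X : Set V) ∧
      ∀ ⦃u v : V⦄ (P : G.Walk u v), IsDetour G P → ∃ w ∈ X, w ∈ P.support := by
  obtain ⟨X, hX, hmeet⟩ := hchord.exists_isClique_forall_exists_mem Finset.univ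
    {S | ∃ (u v : V) (P : G.Walk u v), IsDetour G P ∧ S = {z | z ∈ P.support}}
    (fun _ _ => by simp)
    (by rintro _ ⟨u, v, P, -, rfl⟩; exact ⟨u, P.start_mem_support⟩)
    (by rintro _ ⟨u, v, P, -, rfl⟩; exact P.connected_induce_support.preconnected)
    (by
      rintro _ ⟨u, v, P, hP, rfl⟩ _ ⟨x, y, Q, hQ, rfl⟩
      obtain ⟨z, hzP, hzQ⟩ := hP.exists_mem_support_mem_support hconn hQ
      exact ⟨z, hzP, z, hzQ, .inl rfl⟩)
  exact ⟨X, hX, fun u v P hP => hmeet _ ⟨u, v, P, hP, rfl⟩⟩
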